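/- arXiv:1007.4040 — 8 statements merged into one kernel-verified Lean document; each statement's English description precedes it below -/
import Mathlib

section
/- If a dl-program K = (O,P) is positive (i.e., P contains no negation-as-failure and every dl-atom occurring in P is monotonic relative to K), then K has a least model with respect to set inclusion. -/
namespace DLP

/-- The three dl-atom input operators ⊕, ⊙, ⊖. -/
inductive Op | oplus | odot | ominus

/-- An abstract dl-atom `DL[S₁ op₁ p₁, …; Q](t)`: a list of inputs together with
the entailment check `O ∪ A ⊨ Q(t)` applied to a set of (possibly negated) assertions. -/
structure DLA (Conc Pred Arg : Type) where
  inputs : List (Conc × Op × Pred)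
  entails : Set (Conc × Arg × Bool) → Prop

variable {Conc Pred Arg : Type}

/-- Atoms of the Herbrand base: predicate applied to an argument tuple. -/
abbrev Atom (Pred Arg : Type) := Pred × Arg

/-- Interpretations are subsets of the Herbrand base. -/
abbrev Interp (Pred Arg : Type) := Set (Atom Pred Arg)

/-- Extension of a predicate under an interpretation. -/
def extOf (I : Interp Pred Arg) : Pred → Set Arg := fun p => {e | (p, e) ∈ I}

/-- The assertions contributed by one input entry, given predicate extensions. -/
def contrib (ext : Pred → Set Arg) : Conc × Op × Pred → Set (Conc × Arg × Bool)
  | (S, Op.oplus, p) => {x | ∃ e ∈ ext p, x = (S, e, true)}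
  | (S, Op.odot, p) => {x | ∃ e ∈ ext p, x = (S, e, false)}
  | (S, Op.ominus, p) => {x | ∃ e, e ∉ ext p ∧ x = (S, e, false)}

/-- Evaluate a dl-atom on given predicate extensions. -/
def DLA.eval (A : DLA Conc Pred Arg) (ext : Pred → Set Arg) : Prop :=
  A.entails {x | ∃ c ∈ A.inputs, x ∈ contrib ext c}

/-- `I ⊨_O A` for a dl-atom `A`. -/
def DLA.sat (A : DLA Conc Pred Arg) (I : Interp Pred Arg) : Prop := A.eval (extOf I)

/-- A dl-atom is monotonic (relative to the program) if `I ⊨_O A` and `I ⊆ I'` imply `I' ⊨_O A`. -/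
def DLA.Mono (A : DLA Conc Pred Arg) : Prop :=
  ∀ ⦃I J : Interp Pred Arg⦄, I ⊆ J → A.sat I → A.sat J

/-- A body element: an ordinary atom or a dl-atom. -/
abbrev BodyElem (Conc Pred Arg : Type) := Atom Pred Arg ⊕ DLA Conc Pred Arg

/-- Satisfaction of a body element: membership for atoms, dl-satisfaction for dl-atoms. -/
def satB (I : Interp Pred Arg) : BodyElem Conc Pred Arg → Prop
  | Sum.inl a => a ∈ I
  | Sum.inr d => d.sat I

/-- A dl-rule `head ← Pos, not Neg`. -/
structure Rule (Conc Pred Arg : Type) where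
  head : Atom Pred Arg
  pos : Set (BodyElem Conc Pred Arg)
  neg : Set (BodyElem Conc Pred Arg)

/-- A dl-program: a set of dl-rules (the ontology `O` is folded into the
entailment relation carried by each dl-atom). -/
structure Prog (Conc Pred Arg : Type) where
  rules : Set (Rule Conc Pred Arg)

/-- `I` satisfies the body of rule `r` relative to `O`. -/
def satBody (I : Interp Pred Arg) (r : Rule Conc Pred Arg) : Prop :=
  (∀ b ∈ r.pos, satB I b) ∧ (∀ b ∈ r.neg, ¬ satB I b)

/-- `I` is a model of the dl-program. -/
def isModel (P : Prog Conc Pred Arg) (I : Interp Pred Arg) : Prop :=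
  ∀ r ∈ P.rules, satBody I r → r.head ∈ I

/-- `I` is a supported model of the dl-program. -/
def Supported (P : Prog Conc Pred Arg) (I : Interp Pred Arg) : Prop :=
  isModel P I ∧ ∀ h ∈ I, ∃ r ∈ P.rules, r.head = h ∧ satBody I r

/-- `I` satisfies the completion `COMP(K)` relative to `O`. -/
def satComp (P : Prog Conc Pred Arg) (I : Interp Pred Arg) : Prop :=
  ∀ h : Atom Pred Arg, h ∈ I ↔ ∃ r ∈ P.rules, r.head = h ∧ satBody I r

/-- A positive dl-program: no negation as failure, and all occurring dl-atoms monotonic. -/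
def Positive (P : Prog Conc Pred Arg) : Prop :=
  (∀ r ∈ P.rules, r.neg = (∅ : Set (BodyElem Conc Pred Arg))) ∧
  (∀ r ∈ P.rules, ∀ d : DLA Conc Pred Arg, Sum.inr d ∈ r.pos ∪ r.neg → d.Mono)

/-- One-step consequence operator `γ_K`. -/
def gamma (P : Prog Conc Pred Arg) (J : Interp Pred Arg) : Interp Pred Arg :=
  {h | ∃ r ∈ P.rules, r.head = h ∧ ∀ b ∈ r.pos, satB J b}

/-- Least fixed point of the one-step consequence operator (Knaster–Tarski form). -/
def lfpGamma (P : Prog Conc Pred Arg) : Interp Pred Arg :=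
  ⋂₀ {J | gamma P J ⊆ J}

/-- The weak dl-transform `wP_O^I`. -/
def weakReduct (P : Prog Conc Pred Arg) (I : Interp Pred Arg) : Prog Conc Pred Arg :=
  ⟨{r' | ∃ r ∈ P.rules,
      (∀ d : DLA Conc Pred Arg, Sum.inr d ∈ r.pos → d.sat I) ∧
      (∀ b ∈ r.neg, ¬ satB I b) ∧
      r' = ⟨r.head, {b ∈ r.pos | ∃ a, b = Sum.inl a}, ∅⟩}⟩

/-- The strong dl-transform `sP_O^I`. -/
def strongReduct (P : Prog Conc Pred Arg) (I : Interp Pred Arg) : Prog Conc Pred Arg :=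
  ⟨{r' | ∃ r ∈ P.rules,
      (∀ d : DLA Conc Pred Arg, Sum.inr d ∈ r.pos → ¬ d.Mono → d.sat I) ∧
      (∀ b ∈ r.neg, ¬ satB I b) ∧
      r' = ⟨r.head,
            {b ∈ r.pos | (∃ a, b = Sum.inl a) ∨ ∃ d : DLA Conc Pred Arg, b = Sum.inr d ∧ d.Mono},
            ∅⟩}⟩

/-- `I` is a weak answer set: the least model of the weak dl-transform. -/
def WeakAS (P : Prog Conc Pred Arg) (I : Interp Pred Arg) : Prop :=
  IsLeast {J | isModel (weakReduct P I) J} I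

/-- `I` is a strong answer set: the least model of the strong dl-transform. -/
def StrongAS (P : Prog Conc Pred Arg) (I : Interp Pred Arg) : Prop :=
  IsLeast {J | isModel (strongReduct P I) J} I

/-- A loop of a directed graph: a nonempty vertex set through which a cycle passes,
visiting only and all its nodes (i.e., strongly connected via nonempty paths inside `L`). -/
def IsLoop {α : Type} (E : α → α → Prop) (L : Set α) : Prop :=
  L.Nonempty ∧ ∀ u ∈ L, ∀ v ∈ L,
    Relation.TransGen (fun a b => E a b ∧ a ∈ L ∧ b ∈ L) u v

/-- A maximal loop. -/
def MaxLoop {α : Type} (E : α → α → Prop) (L : Set α) : Prop :=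
  IsLoop E L ∧ ∀ L', IsLoop E L' → L ⊆ L' → L' = L

/-- A terminating loop: a maximal loop from which no other maximal loop is reachable. -/
def TermLoop {α : Type} (E : α → α → Prop) (L : Set α) : Prop :=
  MaxLoop E L ∧ ∀ L', MaxLoop E L' → L' ≠ L →
    ∀ u ∈ L, ∀ v ∈ L', ¬ Relation.ReflTransGen E u v

/-- Edge relation of the weak positive dependency graph. -/
def edgeWeak (P : Prog Conc Pred Arg) (u v : Atom Pred Arg) : Prop :=
  ∃ r ∈ P.rules, r.head = u ∧ Sum.inl v ∈ r.pos

/-- The dl-atom mentions predicate `q` among its input predicates. -/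
def mentionsPred (d : DLA Conc Pred Arg) (q : Pred) : Prop :=
  ∃ S op, (S, op, q) ∈ d.inputs

/-- Edge relation of the strong positive dependency graph. -/
def edgeStrong (P : Prog Conc Pred Arg) (u v : Atom Pred Arg) : Prop :=
  ∃ r ∈ P.rules, r.head = u ∧
    (Sum.inl v ∈ r.pos ∨
     ∃ d : DLA Conc Pred Arg, Sum.inr d ∈ r.pos ∧ d.Mono ∧ mentionsPred d v.1)

/-- Satisfaction of the weak loop formula `wLF(L,K)` by `I` relative to `O`. -/
def satWLF (P : Prog Conc Pred Arg) (I : Interp Pred Arg) (L : Set (Atom Pred Arg)) : Prop :=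
  (∃ a ∈ L, a ∈ I) →
    ∃ r ∈ P.rules, r.head ∈ L ∧ (∀ a ∈ L, Sum.inl a ∉ r.pos) ∧ satBody I r

/-- Predicate extensions used by the irrelevant formula `IF(A,L)`: predicates occurring
in `L` are renamed to `p_L`, whose extension (under the extension `I'` of `I`) consists of
the `p`-atoms of `I \ L`; other predicates keep their extension in `I`. -/
def extIF (I L : Interp Pred Arg) : Pred → Set Arg := fun p =>
  {e | ((∃ e', (p, e') ∈ L) ∧ (p, e) ∈ I \ L) ∨ ((¬ ∃ e', (p, e') ∈ L) ∧ (p, e) ∈ I)}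

/-- `I' ⊨_O IF(A,L)`: the irrelevant formula of `A` relative to `L`, evaluated under
the extension `I'` of `I` satisfying the renamed-predicate axioms. -/
def satIF (A : DLA Conc Pred Arg) (I L : Interp Pred Arg) : Prop :=
  A.eval (extIF I L)

/-- Satisfaction of `γ(A, L)`-transformed positive body elements
(monotonic dl-atoms are replaced by their irrelevant formulas). -/
def satGammaB (I L : Interp Pred Arg) : BodyElem Conc Pred Arg → Prop
  | Sum.inl a => a ∈ I
  | Sum.inr d => (d.Mono → satIF d I L) ∧ (¬ d.Mono → d.sat I)

/-- Satisfaction of the strong loop formula `sLF(L,K)` by (the extension of) `I`. -/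
def satSLF (P : Prog Conc Pred Arg) (I : Interp Pred Arg) (L : Set (Atom Pred Arg)) : Prop :=
  (∃ a ∈ L, a ∈ I) →
    ∃ r ∈ P.rules, r.head ∈ L ∧ (∀ a ∈ L, Sum.inl a ∉ r.pos) ∧
      (∀ b ∈ r.pos, satGammaB I L b) ∧ (∀ b ∈ r.neg, ¬ satB I b)

/-- `v` is a positive (nonmonotonic) dependency of dl-atom `d`. -/
def posDep (d : DLA Conc Pred Arg) (v : Atom Pred Arg) : Prop :=
  ∃ I : Interp Pred Arg, ¬ d.sat I ∧ d.sat (I ∪ {v})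

/-- `v` is a negative (nonmonotonic) dependency of dl-atom `d`. -/
def negDep (d : DLA Conc Pred Arg) (v : Atom Pred Arg) : Prop :=
  ∃ I : Interp Pred Arg, d.sat I ∧ ¬ d.sat (I ∪ {v})

/-- Edge relation of the canonical dependency graph. -/
def edgeCanon (P : Prog Conc Pred Arg) (u v : Atom Pred Arg) : Prop :=
  ∃ r ∈ P.rules, r.head = u ∧
    ((∃ b ∈ r.pos, ∃ I : Interp Pred Arg, ¬ satB I b ∧ satB (I ∪ {v}) b) ∨
     (∃ b ∈ r.neg, ∃ I : Interp Pred Arg, satB I b ∧ ¬ satB (I ∪ {v}) b))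

/-- Predicate extensions for the positive canonical irrelevant formula `pCF(A,L)`:
only predicates having an atom in `L` that is a positive dependency of `A` are renamed. -/
def extPCF (d : DLA Conc Pred Arg) (I L : Interp Pred Arg) : Pred → Set Arg := fun p =>
  {e | ((∃ e', (p, e') ∈ L ∧ posDep d (p, e')) ∧ (p, e) ∈ I \ L) ∨
       ((¬ ∃ e', (p, e') ∈ L ∧ posDep d (p, e')) ∧ (p, e) ∈ I)}

/-- Predicate extensions for the negative canonical irrelevant formula `nCF(A,L)`. -/
def extNCF (d : DLA Conc Pred Arg) (I L : Interp Pred Arg) : Pred → Set Arg := fun p =>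
  {e | ((∃ e', (p, e') ∈ L ∧ negDep d (p, e')) ∧ (p, e) ∈ I \ L) ∨
       ((¬ ∃ e', (p, e') ∈ L ∧ negDep d (p, e')) ∧ (p, e) ∈ I)}

/-- `I' ⊨_O pCF(A,L)`. -/
def satPCF (d : DLA Conc Pred Arg) (I L : Interp Pred Arg) : Prop := d.eval (extPCF d I L)

/-- `I' ⊨_O nCF(A,L)`. -/
def satNCF (d : DLA Conc Pred Arg) (I L : Interp Pred Arg) : Prop := d.eval (extNCF d I L)

/-- `δ₁(A,L)`: nonmonotonic dl-atoms are replaced by `pCF(A,L)`; otherwise `γ(A,L)`. -/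
def satDelta1 (I L : Interp Pred Arg) : BodyElem Conc Pred Arg → Prop
  | Sum.inl a => a ∈ I
  | Sum.inr d => (¬ d.Mono → satPCF d I L) ∧ (d.Mono → satIF d I L)

/-- `δ₂(B,L)`: nonmonotonic dl-atoms are replaced by `nCF(B,L)`; otherwise unchanged. -/
def satDelta2 (I L : Interp Pred Arg) : BodyElem Conc Pred Arg → Prop
  | Sum.inl a => a ∈ I
  | Sum.inr d => (¬ d.Mono → satNCF d I L) ∧ (d.Mono → d.sat I)

/-- Satisfaction of the canonical loop formula `cLF(L,M,K)` by (the extension of) `I`. -/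
def satCLF (P : Prog Conc Pred Arg) (I M : Interp Pred Arg) (L : Set (Atom Pred Arg)) : Prop :=
  (∃ a ∈ L, a ∈ I) →
    ∃ r ∈ P.rules, r.head ∈ L ∧ (∀ a ∈ L, Sum.inl a ∉ r.pos) ∧ satBody M r ∧
      (∀ b ∈ r.pos, satDelta1 I L b) ∧ (∀ b ∈ r.neg, ¬ satDelta2 I L b)

/-- `I` is a canonical answer set of the dl-program. -/
def CanonAS (P : Prog Conc Pred Arg) (I : Interp Pred Arg) : Prop :=
  satComp P I ∧ ∀ L, IsLoop (edgeCanon P) L → satCLF P I I L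

/-- A normal logic program: all body elements are ordinary atoms. -/
def Normal (P : Prog Conc Pred Arg) : Prop :=
  ∀ r ∈ P.rules, ∀ b ∈ r.pos ∪ r.neg, ∃ a : Atom Pred Arg, b = Sum.inl a

/-- The Gelfond–Lifschitz-style reduct: delete rules with a satisfied negated body
member, and delete all negated members from remaining rules. -/
def glReduct (P : Prog Conc Pred Arg) (I : Interp Pred Arg) : Prog Conc Pred Arg :=
  ⟨{r' | ∃ r ∈ P.rules, (∀ b ∈ r.neg, ¬ satB I b) ∧ r' = ⟨r.head, r.pos, ∅⟩}⟩


/-- A positive dl-program (no negation as failure, all dl-atoms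
monotonic) has a least model w.r.t. set inclusion. -/
theorem stmt0 {Conc Pred Arg : Type} (K : Prog Conc Pred Arg) (hpos : Positive K) :
    ∃ M : Interp Pred Arg, IsLeast {I | isModel K I} M := by
  refine ⟨⋂₀ {I | isModel K I}, ?_, fun I hI => Set.sInter_subset_of_mem hI⟩
  intro r hr hb I hI
  have hsub : ⋂₀ {I | isModel K I} ⊆ I := Set.sInter_subset_of_mem hI
  apply hI r hr
  refine ⟨fun b hbpos => ?_, ?_⟩
  · cases b with
    | inl a => exact hsub (hb.1 _ hbpos)
    | inr d =>
      exact (hpos.2 r hr d (Set.mem_union_left _ hbpos)) hsub (hb.1 _ hbpos)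
  · rw [hpos.1 r hr]; intro b hbn; exact absurd hbn (Set.notMem_empty b)

end DLP
end

section
/- Every weak answer set of a dl-program K = (O,P) is a supported model of K. -/
namespace DLP

variable {Conc Pred Arg : Type}

/-- Every weak answer set of a dl-program is a supported model. -/
theorem stmt3 {Conc Pred Arg : Type} (K : Prog Conc Pred Arg) (I : Interp Pred Arg)
    (h : WeakAS K I) : Supported K I := by
  obtain ⟨hmod, hleast⟩ := h
  have hKmod : isModel K I := by
    intro r hr ⟨hpos, hneg⟩
    have := hmod ⟨r.head, {b ∈ r.pos | ∃ a, b = Sum.inl a}, ∅⟩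
      ⟨r, hr, fun d hd => hpos _ hd, hneg, rfl⟩
    exact this ⟨fun b hb => hpos b hb.1, fun b hb => absurd hb (Set.notMem_empty b)⟩
  refine ⟨hKmod, ?_⟩
  set J : Interp Pred Arg :=
    {a ∈ I | ∃ r ∈ K.rules, r.head = a ∧ satBody I r} with hJ
  have hJmod : isModel (weakReduct K I) J := by
    rintro r' ⟨r, hr, hdl, hneg, rfl⟩ ⟨hpos, -⟩
    have hposI : ∀ b ∈ r.pos, satB I b := by
      intro b hb
      cases b with
      | inl a => exact (hpos _ ⟨hb, a, rfl⟩).1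
      | inr d => exact hdl d hb
    have hbody : satBody I r := ⟨hposI, hneg⟩
    refine ⟨hKmod r hr hbody, r, hr, rfl, hbody⟩
  have hsub : I ⊆ J := hleast hJmod
  intro a ha
  obtain ⟨-, r, hr, hh, hb⟩ := hsub ha
  exact ⟨r, hr, hh, hb⟩

end DLP
end

section
/- Every strong answer set of a dl-program K = (O,P) is a supported model of K. -/
namespace DLP

variable {Conc Pred Arg : Type}

/-- Every strong answer set of a dl-program is a supported model. -/
theorem stmt4 {Conc Pred Arg : Type} (K : Prog Conc Pred Arg) (I : Interp Pred Arg)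
    (h : StrongAS K I) : Supported K I := by
  obtain ⟨hmod, hleast⟩ := h
  have hIsat : ∀ r ∈ K.rules, satBody I r → r.head ∈ I := by
    intro r hr ⟨hpos, hneg⟩
    apply hmod ⟨r.head, {b ∈ r.pos | (∃ a, b = Sum.inl a) ∨ ∃ d : DLA Conc Pred Arg,
        b = Sum.inr d ∧ d.Mono}, ∅⟩
    · exact ⟨r, hr, fun d hd _ => hpos _ hd, hneg, rfl⟩
    · exact ⟨fun b hb => hpos b hb.1, fun b hb => absurd hb (Set.notMem_empty b)⟩
  refine ⟨hIsat, ?_⟩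
  intro a ha
  by_contra hno
  push_neg at hno
  -- I \ {a} is a model of the strong reduct
  have hJ : isModel (strongReduct K I) (I \ {a}) := by
    rintro r' ⟨r, hr, hnm, hneg, rfl⟩ ⟨hpos, -⟩
    have hbodyI : satBody I r := by
      refine ⟨fun b hb => ?_, hneg⟩
      by_cases hm : (∃ a', b = Sum.inl a') ∨ ∃ d : DLA Conc Pred Arg, b = Sum.inr d ∧ d.Mono
      · have hs := hpos b ⟨hb, hm⟩
        rcases hm with ⟨a', hb'⟩ | ⟨d, hb', hd⟩ <;> subst hb'
        · exact hs.1
        · exact hd Set.diff_subset hs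
      · push_neg at hm
        obtain a' | d := b
        · exact absurd rfl (hm.1 a')
        · exact hnm d hb (fun hmono => hm.2 d rfl hmono)
    have hheadI : r.head ∈ I := hIsat r hr hbodyI
    have : r.head ≠ a := fun he => hno r hr (he ▸ rfl) hbodyI
    exact ⟨hheadI, this⟩
  have := hleast hJ ha
  exact this.2 rfl

end DLP
end

section
/- An interpretation I is a weak answer set of a dl-program K = (O,P) if and only if I satisfies, relative to O, the completion COMP(K) together with the weak loop formula wLF(L,K) of every weak loop L of K. -/
namespace DLP

variable {Conc Pred Arg : Type}

/-- Helper: if `J` models the weak reduct, `r` is a rule whose body `I` satisfies, and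
`r.head ∉ J`, then some ordinary positive atom of `r` is in `I \ J`. -/
lemma escape {K : Prog Conc Pred Arg} {I J : Interp Pred Arg}
    (hJ : isModel (weakReduct K I) J) {r : Rule Conc Pred Arg}
    (hr : r ∈ K.rules) (hb : satBody I r) (hhead : r.head ∉ J) :
    ∃ a, Sum.inl a ∈ r.pos ∧ a ∈ I ∧ a ∉ J := by
  by_contra h
  push_neg at h
  apply hhead
  refine hJ ⟨r.head, {b ∈ r.pos | ∃ a, b = Sum.inl a}, ∅⟩
    ⟨r, hr, fun d hd => hb.1 _ hd, hb.2, rfl⟩ ⟨?_, ?_⟩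
  · rintro b ⟨hbpos, a, rfl⟩
    have haI : a ∈ I := hb.1 _ hbpos
    exact h a hbpos haI
  · intro b hb'
    exact absurd hb' (Set.notMem_empty b)

/-- Helper: the reduced rule's positive body satisfied by `I` when `satBody I r`. -/
lemma reducedBody {I : Interp Pred Arg}
    {r : Rule Conc Pred Arg} (hb : satBody I r) :
    satBody I (⟨r.head, {b ∈ r.pos | ∃ a, b = Sum.inl a}, ∅⟩ : Rule Conc Pred Arg) := by
  refine ⟨?_, fun b hb' => absurd hb' (Set.notMem_empty b)⟩
  rintro b ⟨hbpos, a, rfl⟩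
  exact hb.1 _ hbpos

/-- Leastness from completion + weak loop formulas (the hard direction). -/
lemma least_of_comp_wlf [Fintype Pred] [Fintype Arg]
    (K : Prog Conc Pred Arg) (I : Interp Pred Arg)
    (hcomp : satComp K I) (hwlf : ∀ L, IsLoop (edgeWeak K) L → satWLF K I L)
    (J : Interp Pred Arg) (hJ : isModel (weakReduct K I) J) : I ⊆ J := by
  intro x hxI
  by_contra hxJ
  classical
  set X : Set (Atom Pred Arg) := I \ J with hXdef
  have hxX : x ∈ X := ⟨hxI, hxJ⟩
  -- supporting-rule edges inside X
  set E : Atom Pred Arg → Atom Pred Arg → Prop := fun u v =>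
    u ∈ X ∧ v ∈ X ∧ ∃ r ∈ K.rules, r.head = u ∧ satBody I r ∧ Sum.inl v ∈ r.pos with hEdef
  set S : Atom Pred Arg → Set (Atom Pred Arg) :=
    fun u => {v | Relation.ReflTransGen E u v} with hSdef
  have hout : ∀ u ∈ X, ∃ v, E u v := by
    intro u hu
    obtain ⟨r, hr, hh, hb⟩ := (hcomp u).1 hu.1
    obtain ⟨a, ha, haI, haJ⟩ := escape hJ hr hb (by rw [hh]; exact hu.2)
    exact ⟨a, hu, ⟨haI, haJ⟩, r, hr, hh, hb, ha⟩
  have hSX : ∀ u ∈ X, S u ⊆ X := by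
    intro u hu v hv
    rcases (Relation.ReflTransGen.cases_tail hv) with h | ⟨w, _, e⟩
    · exact h ▸ hu
    · exact e.2.1
  obtain ⟨m, hmX, hmin⟩ := Set.exists_min_image X (fun u => (S u).ncard) (Set.toFinite X) ⟨x, hxX⟩
  have hmL : m ∈ S m := Relation.ReflTransGen.refl
  have hLX : S m ⊆ X := hSX m hmX
  have hSsub : ∀ v ∈ S m, S v ⊆ S m := fun v hv w hw => Relation.ReflTransGen.trans hv hw
  have hSeq : ∀ v ∈ S m, S v = S m := by
    intro v hv
    exact Set.eq_of_subset_of_ncard_le (hSsub v hv) (hmin v (hLX hv)) (Set.toFinite _)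
  have hEedge : ∀ {u v}, E u v → edgeWeak K u v := by
    rintro u v ⟨_, _, r, hr, hh, _, hp⟩
    exact ⟨r, hr, hh, hp⟩
  have hlift : ∀ v ∈ S m, ∀ w, Relation.ReflTransGen E v w →
      Relation.ReflTransGen (fun a b => edgeWeak K a b ∧ a ∈ S m ∧ b ∈ S m) v w := by
    intro v hv w hw
    induction hw with
    | refl => exact Relation.ReflTransGen.refl
    | @tail b c h e ih =>
      have hbL : b ∈ S m := hSsub v hv h
      have hcL : c ∈ S m := hSsub v hv (Relation.ReflTransGen.tail h e)
      exact Relation.ReflTransGen.tail ih ⟨hEedge e, hbL, hcL⟩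
  have hloop : IsLoop (edgeWeak K) (S m) := by
    refine ⟨⟨m, hmL⟩, ?_⟩
    intro u hu v hv
    obtain ⟨u', hu'⟩ := hout u (hLX hu)
    have hu'L : u' ∈ S m := hSsub u hu (Relation.ReflTransGen.single hu')
    have hu'm : Relation.ReflTransGen E u' m := by
      have : m ∈ S u' := (hSeq u' hu'L) ▸ hmL
      exact this
    have hpath : Relation.ReflTransGen (fun a b => edgeWeak K a b ∧ a ∈ S m ∧ b ∈ S m) u' v :=
      hlift u' hu'L v (Relation.ReflTransGen.trans hu'm hv)
    exact Relation.TransGen.head' ⟨hEedge hu', hu, hu'L⟩ hpath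
  obtain ⟨r, hr, hhead, hdisj, hb⟩ := hwlf (S m) hloop ⟨m, hmL, (hLX hmL).1⟩
  obtain ⟨a, ha, haI, haJ⟩ := escape hJ hr hb (hLX hhead).2
  have hE : E r.head a := ⟨hLX hhead, ⟨haI, haJ⟩, r, hr, rfl, hb, ha⟩
  have haL : a ∈ S m := hSsub r.head hhead (Relation.ReflTransGen.single hE)
  exact hdisj a haL ha

/-- I is a weak answer set of K iff I satisfies, relative to O, the
completion COMP(K) together with the weak loop formula of every weak loop of K. -/
theorem stmt5 {Conc Pred Arg : Type} [Fintype Pred] [Fintype Arg]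
    (K : Prog Conc Pred Arg) (I : Interp Pred Arg) :
    WeakAS K I ↔ (satComp K I ∧ ∀ L, IsLoop (edgeWeak K) L → satWLF K I L) := by
  constructor
  · rintro ⟨hIm, hleast⟩
    have hIm' : isModel (weakReduct K I) I := hIm
    constructor
    · intro h
      constructor
      · intro hhI
        by_contra hno
        push_neg at hno
        have hmodel : isModel (weakReduct K I) (I \ {h}) := by
          rintro r' ⟨r, hr, hdl, hneg, rfl⟩ hbody
          have hposI : ∀ b ∈ r.pos, satB I b := by
            intro b hbp
            cases b with
            | inl a =>
              have := hbody.1 (Sum.inl a) ⟨hbp, a, rfl⟩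
              exact this.1
            | inr d => exact hdl d hbp
          have hsb : satBody I r := ⟨hposI, hneg⟩
          have hheadI : r.head ∈ I := hIm' ⟨r.head, {b ∈ r.pos | ∃ a, b = Sum.inl a}, ∅⟩ ⟨r, hr, hdl, hneg, rfl⟩ (reducedBody hsb)
          have hne : r.head ∉ ({h} : Set (Atom Pred Arg)) := by
            intro he
            exact hno r hr he hsb
          exact ⟨hheadI, hne⟩
        exact (hleast hmodel hhI).2 rfl
      · rintro ⟨r, hr, rfl, hbody⟩
        exact hIm' ⟨r.head, {b ∈ r.pos | ∃ a, b = Sum.inl a}, ∅⟩ ⟨r, hr, fun d hd => hbody.1 _ hd, hbody.2, rfl⟩ (reducedBody hbody)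
    · rintro L hL ⟨a0, ha0L, ha0I⟩
      have hnot : ¬ isModel (weakReduct K I) (I \ L) := by
        intro hm
        exact (hleast hm ha0I).2 ha0L
      unfold isModel at hnot
      push_neg at hnot
      obtain ⟨r', hr'mem, hbody, hhead⟩ := hnot
      obtain ⟨r, hr, hdl, hneg, rfl⟩ := hr'mem
      have hposI : ∀ b ∈ r.pos, satB I b := by
        intro b hbp
        cases b with
        | inl a =>
          have := hbody.1 (Sum.inl a) ⟨hbp, a, rfl⟩
          exact this.1
        | inr d => exact hdl d hbp
      have hsb : satBody I r := ⟨hposI, hneg⟩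
      have hheadI : r.head ∈ I := hIm' ⟨r.head, {b ∈ r.pos | ∃ a, b = Sum.inl a}, ∅⟩ ⟨r, hr, hdl, hneg, rfl⟩ (reducedBody hsb)
      have hheadL : r.head ∈ L := by
        by_contra hc
        exact hhead ⟨hheadI, hc⟩
      refine ⟨r, hr, hheadL, ?_, hsb⟩
      intro a haL hap
      have : a ∈ I \ L := hbody.1 (Sum.inl a) ⟨hap, a, rfl⟩
      exact this.2 haL
  · rintro ⟨hcomp, hwlf⟩
    constructor
    · rintro r' ⟨r, hr, hdl, hneg, rfl⟩ hbody
      apply (hcomp r.head).2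
      refine ⟨r, hr, rfl, ?_, hneg⟩
      intro b hbp
      cases b with
      | inl a => exact hbody.1 (Sum.inl a) ⟨hbp, a, rfl⟩
      | inr d => exact hdl d hbp
    · intro J hJ
      exact least_of_comp_wlf K I hcomp hwlf J hJ

end DLP
end

section
/- Let K = (O,P) be a dl-program, I an interpretation, and suppose I satisfies COMP(K) relative to O. Then the least fixed point of the one-step consequence operator of the strong dl-transform sP_O^I is contained in I. -/
namespace DLP

variable {Conc Pred Arg : Type}

/-! A rule of `sP_O^I` whose body holds in `I` comes from a rule of `K` whose whole body holds
in `I`: the nonmonotonic dl-atoms and negated members removed by the transform were already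
evaluated against `I`. Hence every model of `K` is closed under `γ` of `sP_O^I`, and `COMP(K)`
makes `I` such a model; the least fixed point lies below every `γ`-closed set. -/

theorem lfpGamma_subset {P : Prog Conc Pred Arg} {J : Interp Pred Arg}
    (hJ : gamma P J ⊆ J) : lfpGamma P ⊆ J :=
  Set.sInter_subset_of_mem hJ

theorem satComp.isModel {P : Prog Conc Pred Arg} {I : Interp Pred Arg} (h : satComp P I) :
    isModel P I :=
  fun r hr hbody => (h r.head).2 ⟨r, hr, rfl, hbody⟩

theorem exists_satBody_of_mem_strongReduct {P : Prog Conc Pred Arg} {I : Interp Pred Arg}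
    {r' : Rule Conc Pred Arg} (hr' : r' ∈ (strongReduct P I).rules)
    (hpos : ∀ b ∈ r'.pos, satB I b) : ∃ r ∈ P.rules, r.head = r'.head ∧ satBody I r := by
  obtain ⟨r, hr, hnonmono, hneg, rfl⟩ := hr'
  refine ⟨r, hr, rfl, fun b hb => ?_, hneg⟩
  rcases b with a | d
  · exact hpos (Sum.inl a) ⟨hb, Or.inl ⟨a, rfl⟩⟩
  · by_cases hmono : d.Mono
    · exact hpos (Sum.inr d) ⟨hb, Or.inr ⟨d, rfl, hmono⟩⟩
    · exact hnonmono d hb hmono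

theorem isModel.gamma_strongReduct_subset {P : Prog Conc Pred Arg} {I : Interp Pred Arg}
    (hI : isModel P I) : gamma (strongReduct P I) I ⊆ I := by
  rintro _ ⟨r', hr', rfl, hpos⟩
  obtain ⟨r, hr, hhead, hbody⟩ := exists_satBody_of_mem_strongReduct hr' hpos
  exact hhead ▸ hI r hr hbody

/-- If I satisfies COMP(K), then the least fixed point of the one-step
consequence operator of the strong dl-transform sP_O^I is contained in I. -/
theorem stmt6 {Conc Pred Arg : Type} (K : Prog Conc Pred Arg) (I : Interp Pred Arg)
    (h : satComp K I) : lfpGamma (strongReduct K I) ⊆ I :=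
  lfpGamma_subset h.isModel.gamma_strongReduct_subset

end DLP
end

section
/- Let I' be the extension of interpretation I that interprets every renamed predicate atom p_L(c) as true iff p(c) ∈ I \ L. Then for any dl-atom A and any nonempty set of atoms L, I' satisfies the irrelevant formula IF(A,L) relative to O if and only if I \ L satisfies A relative to O. -/
namespace DLP

variable {Conc Pred Arg : Type}

theorem extIF_eq_extOf_diff (I L : Interp Pred Arg) : extIF I L = extOf (I \ L) := by
  ext p e
  simp only [extIF, extOf, Set.mem_ofPred_eq, Set.mem_sdiff]
  by_cases hp : ∃ e', (p, e') ∈ L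
  · simp [hp]
  · have he : (p, e) ∉ L := fun h => hp ⟨e, h⟩
    simp [hp, he]

theorem stmt8_general {Conc Pred Arg : Type} (A : DLA Conc Pred Arg)
    (I L : Interp Pred Arg) :
    satIF A I L ↔ A.sat (I \ L) :=
  Iff.of_eq (congrArg A.eval (extIF_eq_extOf_diff I L))

/-- With I' the extension of I interpreting each renamed atom p_L(c) as
true iff p(c) ∈ I \ L: for any dl-atom A and nonempty set of atoms L,
I' ⊨_O IF(A,L) iff I \ L ⊨_O A. -/
theorem stmt8 {Conc Pred Arg : Type} (A : DLA Conc Pred Arg)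
    (I L : Interp Pred Arg) (hL : L.Nonempty) :
    satIF A I L ↔ A.sat (I \ L) :=
  stmt8_general A I L

end DLP
end

section
/- An interpretation I is a strong answer set of a dl-program K = (O,P) if and only if the extension I' of I (by the renamed-predicate axioms) satisfies COMP(K) together with the strong loop formula sLF(L,K) of every strong loop L of K, relative to O. -/
namespace DLP

variable {Conc Pred Arg : Type}

/-! ### Auxiliary lemmas for stmt9 -/

lemma contrib_congr {e1 e2 : Pred → Set Arg} {S : Conc} {op : Op} {p : Pred}
    (hep : e1 p = e2 p) : contrib e1 (S, op, p) = contrib e2 (S, op, p) := by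
  cases op <;> simp [contrib, hep]

lemma eval_congr (d : DLA Conc Pred Arg) {e1 e2 : Pred → Set Arg}
    (h : ∀ q, mentionsPred d q → e1 q = e2 q) : d.eval e1 ↔ d.eval e2 := by
  unfold DLA.eval
  have hs : {x | ∃ c ∈ d.inputs, x ∈ contrib e1 c} = {x | ∃ c ∈ d.inputs, x ∈ contrib e2 c} := by
    ext x
    simp only [Set.mem_setOf_eq]
    refine exists_congr fun c => and_congr_right fun hc => ?_
    obtain ⟨S, op, p⟩ := c
    rw [contrib_congr (h p ⟨S, op, hc⟩)]
  rw [hs]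

lemma sat_mono_mentioned (d : DLA Conc Pred Arg) (hM : d.Mono) {A B : Interp Pred Arg}
    (h : ∀ q, mentionsPred d q → extOf A q ⊆ extOf B q) (hA : d.sat A) : d.sat B := by
  have h1 : d.sat (A ∪ B) := hM Set.subset_union_left hA
  have h2 : ∀ q, mentionsPred d q → extOf (A ∪ B) q = extOf B q := by
    intro q hq
    ext e
    simp only [extOf, Set.mem_union, Set.mem_setOf_eq]
    exact ⟨fun h' => h'.elim (fun hx => h q hq hx) id, Or.inr⟩
  exact (eval_congr d h2).mp h1

lemma satIF_iff (d : DLA Conc Pred Arg) (I L : Interp Pred Arg) :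
    satIF d I L ↔ d.sat (I \ L) := by
  unfold satIF DLA.sat
  have hext : extIF I L = extOf (I \ L) := by
    funext p; ext e
    simp only [extIF, extOf, Set.mem_setOf_eq, Set.mem_diff]
    by_cases hp : ∃ e', (p, e') ∈ L
    · simp [hp]
    · simp only [hp, false_and, not_false_iff, true_and, false_or]
      exact ⟨fun hI => ⟨hI, fun hL => hp ⟨e, hL⟩⟩, And.left⟩
  rw [hext]

lemma satB_mono_elem {A B : Interp Pred Arg} (hAB : A ⊆ B) (b : BodyElem Conc Pred Arg)
    (hb : (∃ a, b = Sum.inl a) ∨ ∃ d : DLA Conc Pred Arg, b = Sum.inr d ∧ d.Mono)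
    (h : satB A b) : satB B b := by
  rcases hb with ⟨a, rfl⟩ | ⟨d, rfl, hM⟩
  · exact hAB h
  · exact hM hAB h

lemma body_of_reduct {I : Interp Pred Arg} {r : Rule Conc Pred Arg}
    (h1 : ∀ d : DLA Conc Pred Arg, Sum.inr d ∈ r.pos → ¬ d.Mono → d.sat I)
    (h2 : ∀ b ∈ r.neg, ¬ satB I b)
    (hb : ∀ b ∈ {b ∈ r.pos | (∃ a, b = Sum.inl a) ∨
        ∃ d : DLA Conc Pred Arg, b = Sum.inr d ∧ d.Mono}, satB I b) :
    satBody I r := by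
  refine ⟨fun b hbp => ?_, h2⟩
  rcases b with a | d
  · exact hb _ ⟨hbp, Or.inl ⟨a, rfl⟩⟩
  · by_cases hM : d.Mono
    · exact hb _ ⟨hbp, Or.inr ⟨d, rfl, hM⟩⟩
    · exact h1 d hbp hM

lemma mem_strongReduct {K : Prog Conc Pred Arg} {I : Interp Pred Arg}
    {r : Rule Conc Pred Arg} (hr : r ∈ K.rules)
    (h1 : ∀ d : DLA Conc Pred Arg, Sum.inr d ∈ r.pos → ¬ d.Mono → d.sat I)
    (h2 : ∀ b ∈ r.neg, ¬ satB I b) :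
    (⟨r.head, {b ∈ r.pos | (∃ a, b = Sum.inl a) ∨
        ∃ d : DLA Conc Pred Arg, b = Sum.inr d ∧ d.Mono}, ∅⟩ : Rule Conc Pred Arg)
      ∈ (strongReduct K I).rules :=
  ⟨r, hr, h1, h2, rfl⟩

lemma head_mem_of_model {K : Prog Conc Pred Arg} {I J : Interp Pred Arg}
    (hmodJ : isModel (strongReduct K I) J) {r : Rule Conc Pred Arg} (hr : r ∈ K.rules)
    (h1 : ∀ d : DLA Conc Pred Arg, Sum.inr d ∈ r.pos → ¬ d.Mono → d.sat I)
    (h2 : ∀ b ∈ r.neg, ¬ satB I b)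
    (hb : ∀ b ∈ {b ∈ r.pos | (∃ a, b = Sum.inl a) ∨
        ∃ d : DLA Conc Pred Arg, b = Sum.inr d ∧ d.Mono}, satB J b) : r.head ∈ J :=
  hmodJ (⟨r.head, {b ∈ r.pos | (∃ a, b = Sum.inl a) ∨
        ∃ d : DLA Conc Pred Arg, b = Sum.inr d ∧ d.Mono}, ∅⟩ : Rule Conc Pred Arg)
    (mem_strongReduct hr h1 h2) ⟨hb, fun b hbm => absurd hbm (Set.notMem_empty b)⟩

/-- Edge of the strong dependency graph restricted to a set of atoms. -/
def restrictedEdge (P : Prog Conc Pred Arg) (E : Interp Pred Arg)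
    (u v : Atom Pred Arg) : Prop :=
  edgeStrong P u v ∧ u ∈ E ∧ v ∈ E

/-- Atoms of `E` reachable from `u` via edges inside `E`. -/
def reach (P : Prog Conc Pred Arg) (E : Interp Pred Arg) (u : Atom Pred Arg) :
    Interp Pred Arg :=
  {v | v ∈ E ∧ Relation.ReflTransGen (restrictedEdge P E) u v}

/-- I is a strong answer set of K iff the extension I' of I satisfies
COMP(K) together with the strong loop formula of every strong loop of K. -/
theorem stmt9 {Conc Pred Arg : Type} [Fintype Pred] [Fintype Arg]
    (K : Prog Conc Pred Arg) (I : Interp Pred Arg) :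
    StrongAS K I ↔ (satComp K I ∧ ∀ L, IsLoop (edgeStrong K) L → satSLF K I L) := by
  constructor
  · rintro ⟨hmod, hleast⟩
    -- supportedness
    have hsupp : ∀ h : Atom Pred Arg, h ∈ I → ∃ r ∈ K.rules, r.head = h ∧ satBody I r := by
      intro h hhI
      by_contra hns
      have hmod' : isModel (strongReduct K I) (I \ {h}) := by
        rintro r' ⟨r, hr, h1, h2, rfl⟩ hb
        have hbI : ∀ b ∈ {b ∈ r.pos | (∃ a, b = Sum.inl a) ∨
            ∃ d : DLA Conc Pred Arg, b = Sum.inr d ∧ d.Mono}, satB I b :=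
          fun b hbmem => satB_mono_elem Set.diff_subset b hbmem.2 (hb.1 b hbmem)
        have hBody : satBody I r := body_of_reduct h1 h2 hbI
        have hhd : r.head ∈ I := head_mem_of_model hmod hr h1 h2 hbI
        refine ⟨hhd, fun he => hns ⟨r, hr, he, hBody⟩⟩
      exact (hleast hmod' hhI).2 rfl
    have hcomp : satComp K I := by
      intro h
      refine ⟨hsupp h, ?_⟩
      rintro ⟨r, hr, rfl, hbody⟩
      exact head_mem_of_model hmod hr (fun d hd _ => hbody.1 _ hd) hbody.2
        (fun b hb => hbody.1 b hb.1)
    refine ⟨hcomp, ?_⟩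
    intro L _ hex
    obtain ⟨a, haL, haI⟩ := hex
    by_contra hn
    have hmod' : isModel (strongReduct K I) (I \ L) := by
      rintro r' ⟨r, hr, h1, h2, rfl⟩ hb
      by_cases hhd : r.head ∈ L
      · exfalso
        apply hn
        refine ⟨r, hr, hhd, ?_, ?_, h2⟩
        · intro a' ha' hpos
          exact (hb.1 _ ⟨hpos, Or.inl ⟨a', rfl⟩⟩ : satB (I \ L) (Sum.inl a')).2 ha'
        · intro b hbp
          rcases b with a' | d
          · exact (hb.1 _ ⟨hbp, Or.inl ⟨a', rfl⟩⟩ : satB (I \ L) (Sum.inl a')).1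
          · refine ⟨fun hM => ?_, fun hM => h1 d hbp hM⟩
            rw [satIF_iff]
            exact hb.1 _ ⟨hbp, Or.inr ⟨d, rfl, hM⟩⟩
      · have hbI : ∀ b ∈ {b ∈ r.pos | (∃ a, b = Sum.inl a) ∨
            ∃ d : DLA Conc Pred Arg, b = Sum.inr d ∧ d.Mono}, satB I b :=
          fun b hbmem => satB_mono_elem Set.diff_subset b hbmem.2 (hb.1 b hbmem)
        exact ⟨(head_mem_of_model hmod hr h1 h2 hbI : r.head ∈ I), hhd⟩
    exact (hleast hmod' haI).2 haL
  · rintro ⟨hcomp, hl⟩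
    constructor
    · -- I is a model of the strong reduct
      rintro r' ⟨r, hr, h1, h2, rfl⟩ hb
      exact (hcomp r.head).2 ⟨r, hr, rfl, body_of_reduct h1 h2 hb.1⟩
    · -- minimality
      intro J hJ
      by_contra hIJ
      obtain ⟨w, hwI, hwJ⟩ := Set.not_subset.mp hIJ
      set E : Interp Pred Arg := I \ J with hEdef
      have hwE : w ∈ E := ⟨hwI, hwJ⟩
      obtain ⟨a, haE, hamin⟩ :=
        Set.exists_min_image E (fun u => (reach K E u).ncard) (Set.toFinite E) ⟨w, hwE⟩
      set C : Interp Pred Arg := reach K E a with hCdef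
      have hCE : C ⊆ E := fun v hv => hv.1
      have haC : a ∈ C := ⟨haE, Relation.ReflTransGen.refl⟩
      have hReachEq : ∀ v ∈ C, reach K E v = C := by
        intro v hv
        have hsub : reach K E v ⊆ C := fun x hx => ⟨hx.1, hv.2.trans hx.2⟩
        exact Set.eq_of_subset_of_ncard_le hsub (hamin v hv.1) (Set.toFinite C)
      have hsink : ∀ u ∈ C, ∀ v, edgeStrong K u v → v ∈ E → v ∈ C := by
        intro u hu v hedge hvE
        rw [← hReachEq u hu]
        exact ⟨hvE, Relation.ReflTransGen.single ⟨hedge, hCE hu, hvE⟩⟩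
      by_cases hedgeC : ∃ u ∈ C, ∃ v ∈ C, edgeStrong K u v
      · -- C is a strong loop; use its loop formula
        obtain ⟨u0, hu0, v0, hv0, he0⟩ := hedgeC
        have hRTGC : ∀ u ∈ C, ∀ v, Relation.ReflTransGen (restrictedEdge K E) u v →
            Relation.ReflTransGen (fun x y => edgeStrong K x y ∧ x ∈ C ∧ y ∈ C) u v := by
          intro u hu v hpath
          induction hpath with
          | refl => exact Relation.ReflTransGen.refl
          | @tail b c hab hbc ih =>
            have hbC : b ∈ C := by rw [← hReachEq u hu]; exact ⟨hbc.2.1, hab⟩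
            have hcC : c ∈ C := by
              rw [← hReachEq u hu]; exact ⟨hbc.2.2, hab.tail hbc⟩
            exact ih.tail ⟨hbc.1, hbC, hcC⟩
        have hRTG' : ∀ u ∈ C, ∀ v ∈ C,
            Relation.ReflTransGen (fun x y => edgeStrong K x y ∧ x ∈ C ∧ y ∈ C) u v := by
          intro u hu v hv
          refine hRTGC u hu v ?_
          have : v ∈ reach K E u := by rw [hReachEq u hu]; exact hv
          exact this.2
        have hloop : IsLoop (edgeStrong K) C := by
          refine ⟨⟨a, haC⟩, fun u hu v hv => ?_⟩
          exact Relation.TransGen.trans_right (hRTG' u hu u0 hu0)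
            (Relation.TransGen.trans_left (Relation.TransGen.single ⟨he0, hu0, hv0⟩)
              (hRTG' v0 hv0 v hv))
        obtain ⟨r, hr, hheadC, hnoL, hG, hneg⟩ := hl C hloop ⟨a, haC, haE.1⟩
        have h1 : ∀ d : DLA Conc Pred Arg, Sum.inr d ∈ r.pos → ¬ d.Mono → d.sat I :=
          fun d hd hM => (hG _ hd : satGammaB I C (Sum.inr d)).2 hM
        have hJb : ∀ b ∈ {b ∈ r.pos | (∃ a, b = Sum.inl a) ∨
            ∃ d : DLA Conc Pred Arg, b = Sum.inr d ∧ d.Mono}, satB J b := by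
          rintro b ⟨hbp, hcase⟩
          rcases hcase with ⟨a', rfl⟩ | ⟨d, rfl, hM⟩
          · have ha'I : a' ∈ I := hG _ hbp
            by_contra ha'J
            exact hnoL a' (hsink r.head hheadC a' ⟨r, hr, rfl, Or.inl hbp⟩ ⟨ha'I, ha'J⟩) hbp
          · have hdsat : d.sat (I \ C) :=
              (satIF_iff d I C).mp ((hG _ hbp : satGammaB I C (Sum.inr d)).1 hM)
            refine sat_mono_mentioned d hM ?_ hdsat
            intro q hq e he
            by_contra hqJ
            have hqC : (q, e) ∈ C := hsink r.head hheadC (q, e)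
              ⟨r, hr, rfl, Or.inr ⟨d, hbp, hM, hq⟩⟩ ⟨he.1, hqJ⟩
            exact he.2 hqC
        have hhdJ : r.head ∈ J := head_mem_of_model hJ hr h1 hneg hJb
        exact (hCE hheadC).2 hhdJ
      · -- no edge inside C: use the completion at a
        obtain ⟨r, hr, hhead, hbody⟩ := (hcomp a).1 haE.1
        have h1 : ∀ d : DLA Conc Pred Arg, Sum.inr d ∈ r.pos → ¬ d.Mono → d.sat I :=
          fun d hd _ => hbody.1 _ hd
        have hJb : ∀ b ∈ {b ∈ r.pos | (∃ a, b = Sum.inl a) ∨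
            ∃ d : DLA Conc Pred Arg, b = Sum.inr d ∧ d.Mono}, satB J b := by
          rintro b ⟨hbp, hcase⟩
          rcases hcase with ⟨a', rfl⟩ | ⟨d, rfl, hM⟩
          · have ha'I : a' ∈ I := hbody.1 _ hbp
            by_contra ha'J
            have he : edgeStrong K a a' := ⟨r, hr, hhead, Or.inl hbp⟩
            exact hedgeC ⟨a, haC, a', hsink a haC a' he ⟨ha'I, ha'J⟩, he⟩
          · refine sat_mono_mentioned d hM ?_ (hbody.1 _ hbp)
            intro q hq e he
            by_contra hqJ
            have hed : edgeStrong K a (q, e) := ⟨r, hr, hhead, Or.inr ⟨d, hbp, hM, hq⟩⟩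
            exact hedgeC ⟨a, haC, (q, e), hsink a haC (q, e) hed ⟨he, hqJ⟩, hed⟩
        have hhdJ : r.head ∈ J := head_mem_of_model hJ hr h1 hbody.2 hJb
        exact haE.2 (hhead ▸ hhdJ)

end DLP
end

section
/- For every dl-program K = (O,P), every interpretation I with extension I' (by the renamed-predicate axioms), and every weak loop L of K, I' satisfies the implication sLF(L,K) → wLF(L,K) relative to O. Consequently, every strong answer set of K is a weak answer set of K. -/
namespace DLP

variable {Conc Pred Arg : Type}

/-- For every dl-program, interpretation, and weak loop L, the
extension I' satisfies sLF(L,K) → wLF(L,K); consequently every strong answer set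
is a weak answer set. -/
theorem stmt10 {Conc Pred Arg : Type} [Fintype Pred] [Fintype Arg]
    (K : Prog Conc Pred Arg) :
    (∀ (I : Interp Pred Arg) (L : Set (Atom Pred Arg)), IsLoop (edgeWeak K) L →
        satSLF K I L → satWLF K I L) ∧
    (∀ I : Interp Pred Arg, StrongAS K I → WeakAS K I) := by
  constructor
  · intro I L _hL hS hex
    obtain ⟨r, hr, hhead, hnoL, hpos, hneg⟩ := hS hex
    refine ⟨r, hr, hhead, hnoL, ?_, hneg⟩
    intro b hb
    have h := hpos b hb
    cases b with
    | inl a => exact h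
    | inr d =>
      by_cases hm : d.Mono
      · have hIF := h.1 hm
        set J : Interp Pred Arg :=
          {x | ((∃ e', (x.1, e') ∈ L) ∧ x ∈ I \ L) ∨ ((¬ ∃ e', (x.1, e') ∈ L) ∧ x ∈ I)}
          with hJ
        have hsatJ : d.sat J := by
          have hext : extOf J = extIF I L := by
            funext p; ext e
            simp [extOf, extIF, hJ, Set.mem_setOf_eq]
          show d.eval (extOf J)
          rw [hext]; exact hIF
        have hsub : J ⊆ I := by
          rintro x (⟨_, hx⟩ | ⟨_, hx⟩)
          · exact hx.1
          · exact hx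
        exact hm hsub hsatJ
      · exact h.2 hm
  · intro I hSAS
    have hImodW : isModel (weakReduct K I) I := by
      rintro r' ⟨r, hr, hdl, hneg, rfl⟩ hbody
      apply hSAS.1 ⟨r.head,
          {b ∈ r.pos | (∃ a, b = Sum.inl a) ∨ ∃ d : DLA Conc Pred Arg, b = Sum.inr d ∧ d.Mono},
          ∅⟩ ⟨r, hr, fun d hd _ => hdl d hd, hneg, rfl⟩
      constructor
      · rintro b ⟨hb, (⟨a, rfl⟩ | ⟨d, rfl, hmono⟩)⟩
        · exact hbody.1 _ ⟨hb, a, rfl⟩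
        · exact hdl d hb
      · intro b hb; exact absurd hb (Set.notMem_empty b)
    refine ⟨hImodW, ?_⟩
    intro J hJ
    set J' : Interp Pred Arg := J ∩ I with hJ'def
    have hJ'W : isModel (weakReduct K I) J' := by
      rintro r' ⟨r, hr, hdl, hneg, rfl⟩ hbody
      constructor
      · apply hJ _ ⟨r, hr, hdl, hneg, rfl⟩
        constructor
        · rintro b ⟨hb, a, rfl⟩
          exact (hbody.1 _ ⟨hb, a, rfl⟩).1
        · intro b hb; exact absurd hb (Set.notMem_empty b)
      · apply hImodW _ ⟨r, hr, hdl, hneg, rfl⟩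
        constructor
        · rintro b ⟨hb, a, rfl⟩
          exact (hbody.1 _ ⟨hb, a, rfl⟩).2
        · intro b hb; exact absurd hb (Set.notMem_empty b)
    have hJ'S : isModel (strongReduct K I) J' := by
      rintro r' ⟨r, hr, hdl, hneg, rfl⟩ hbody
      have hall : ∀ d : DLA Conc Pred Arg, Sum.inr d ∈ r.pos → d.sat I := by
        intro d hd
        by_cases hm : d.Mono
        · have : d.sat J' := hbody.1 (Sum.inr d) ⟨hd, Or.inr ⟨d, rfl, hm⟩⟩
          exact hm (Set.inter_subset_right) this
        · exact hdl d hd hm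
      apply hJ'W ⟨r.head, {b ∈ r.pos | ∃ a, b = Sum.inl a}, ∅⟩ ⟨r, hr, hall, hneg, rfl⟩
      constructor
      · rintro b ⟨hb, a, rfl⟩
        exact hbody.1 _ ⟨hb, Or.inl ⟨a, rfl⟩⟩
      · intro b hb; exact absurd hb (Set.notMem_empty b)
    exact (hSAS.2 hJ'S).trans Set.inter_subset_left

end DLP
end
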